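/- arXiv:2005.01892 — 3 statements merged into one kernel-verified Lean document; each statement's English description precedes it below -/
import Mathlib

section
/- For every θ ∈ (0,π) such that θ ≠ kα for all k ∈ ℕ, there exist a sequence x ∈ Σ_θ and an integer m ∈ ℕ such that T_x^{(m)}(θ) ∈ (0,α). -/
open Real MeasureTheory Set Filter Topology
open scoped ENNReal NNReal

noncomputable section

namespace RandomBilliard

/-- The four maps `T_1, …, T_4` of the Feres random map
(index `i : Fin 4` stands for `T_{i+1}`). -/
def T (α : ℝ) : Fin 4 → ℝ → ℝ
  | 0 => fun θ => θ + 2 * α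
  | 1 => fun θ => -θ + 2 * π - 4 * α
  | 2 => fun θ => θ - 2 * α
  | 3 => fun θ => -θ + 4 * α

/-- `u_a(θ) = (1/2)(1 + tan a / tan θ)`. -/
def u (a θ : ℝ) : ℝ := 1 / 2 * (1 + Real.tan a / Real.tan θ)

/-- The probabilities `p_1, …, p_4` of the Feres random map
(index `i : Fin 4` stands for `p_{i+1}`). -/
def p (α : ℝ) : Fin 4 → ℝ → ℝ
  | 0 => fun θ =>
      if θ < α then 1
      else if θ < π - 3 * α then u α θ
      else if θ < π - 2 * α then 2 * Real.cos (2 * α) * u (2 * α) θ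
      else 0
  | 1 => fun θ =>
      if θ < π - 3 * α then 0
      else if θ < π - 2 * α then u α θ - 2 * Real.cos (2 * α) * u (2 * α) θ
      else if θ < π - α then u α θ
      else 0
  | 2 => fun θ =>
      if θ < 2 * α then 0
      else if θ < 3 * α then 2 * Real.cos (2 * α) * u (2 * α) (-θ)
      else if θ < π - α then u α (-θ)
      else 1
  | 3 => fun θ =>
      if θ < α then 0
      else if θ < 2 * α then u α (-θ)
      else if θ < 3 * α then u α (-θ) - 2 * Real.cos (2 * α) * u (2 * α) (-θ)
      else 0

/-- `iterT α x k θ = T_x^{(k)}(θ) = T_{x_k} ∘ ⋯ ∘ T_{x_1}(θ)`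
(the term `x j : Fin 4` stands for the symbol `x_{j+1}`). -/
def iterT (α : ℝ) (x : ℕ → Fin 4) : ℕ → ℝ → ℝ
  | 0 => fun θ => θ
  | k + 1 => fun θ => T α (x k) (iterT α x k θ)

/-- `Σ_θ`: the admissible symbol sequences for `θ`, i.e. those whose every finite
prefix has positive probability. -/
def SigmaTheta (α θ : ℝ) : Set (ℕ → Fin 4) :=
  {x | ∀ k : ℕ, 0 < ∏ j ∈ Finset.range k, p α (x j) (iterT α x j θ)}

/-- `C(θ)`: all possible future images of `θ` under the Feres random map. -/
def Cset (α θ : ℝ) : Set ℝ :=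
  {θ' | θ' ∈ Set.Ioo 0 π ∧
    ∃ (x : ℕ → Fin 4) (k : ℕ), x ∈ SigmaTheta α θ ∧ iterT α x k θ = θ'}

/-- The probability measure `μ(A) = (1/2) ∫_A sin θ dθ` on `[0, π]`. -/
def mu0 : Measure ℝ :=
  (volume.restrict (Set.Icc 0 π)).withDensity fun θ => ENNReal.ofReal (1 / 2 * Real.sin θ)

/-- One step of the evolution of a measure under the Feres random map:
`(stepMeasure α ν)(A) = ∫ K(θ, A) dν(θ)`, where `K(θ, A) = Σ_i p_i(θ) 1_A(T_i θ)`. -/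
def stepMeasure (α : ℝ) (ν : Measure ℝ) : Measure ℝ :=
  ∑ i : Fin 4, Measure.map (T α i) (ν.withDensity fun θ => ENNReal.ofReal (p α i θ))

/-- One step of the evolution of a measure under the random billiard map in the circle
`F̄(s, θ) = (s + 2 T_i(θ) mod 2π, T_i(θ))` with probability `p_i(θ)`. -/
def circleStep (α : ℝ) (ν : Measure (ℝ × ℝ)) : Measure (ℝ × ℝ) :=
  ∑ i : Fin 4,
    Measure.map
      (fun q : ℝ × ℝ => (toIcoMod Real.two_pi_pos 0 (q.1 + 2 * T α i q.2), T α i q.2))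
      (ν.withDensity fun q => ENNReal.ofReal (p α i q.2))

/-- The transition kernel `K(θ', ·) = Σ_i p_i(θ') δ_{T_i(θ')}` of the Feres random map. -/
def feresKernel (α : ℝ) (t : ℝ) : Measure ℝ :=
  ∑ i : Fin 4, ENNReal.ofReal (p α i t) • Measure.dirac (T α i t)

/-- `k`-step iterates of a transition kernel. -/
def kerIterate (κ : ℝ → Measure ℝ) : ℕ → ℝ → Measure ℝ
  | 0 => fun t => Measure.dirac t
  | k + 1 => fun t => (κ t).bind (kerIterate κ k)

/-- The probability that a Markov chain with kernel `κ` started at `t` satisfies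
`θ_0 ∈ B 0, …, θ_n ∈ B n`. -/
def cylProb (κ : ℝ → Measure ℝ) : ℕ → (ℕ → Set ℝ) → ℝ → ℝ≥0∞
  | 0 => fun B t => Set.indicator (B 0) (fun _ => (1 : ℝ≥0∞)) t
  | n + 1 => fun B t =>
      Set.indicator (B 0)
        (fun _ => ∫⁻ t', cylProb κ n (fun k => B (k + 1)) t' ∂(κ t)) t

/-- `ν` is the Markov path measure on `ℕ → ℝ` (given by the Ionescu–Tulcea construction)
with initial distribution `ρ` and transition kernel `κ`, characterized by its values
on cylinder sets. -/
def IsMarkovPathMeasure (κ : ℝ → Measure ℝ) (ρ : Measure ℝ) (ν : Measure (ℕ → ℝ)) : Prop :=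
  ∀ (n : ℕ) (B : ℕ → Set ℝ), (∀ k, MeasurableSet (B k)) →
    ν {ω | ∀ k ≤ n, ω k ∈ B k} = ∫⁻ t, cylProb κ n B t ∂ρ

/-- The shift map on sequences. -/
def shift : (ℕ → ℝ) → ℕ → ℝ := fun ω n => ω (n + 1)

/-- Aperiodicity of the Markov chain with kernel `κ` on the state space `S`:
for every state, every common divisor of the return times having positive
probability equals `1` (i.e. every state has period 1). -/
def AperiodicChain (κ : ℝ → Measure ℝ) (S : Set ℝ) : Prop :=
  ∀ t ∈ S, ∀ d : ℕ, (∀ k : ℕ, 1 ≤ k → 0 < kerIterate κ k t {t} → d ∣ k) → d = 1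

end RandomBilliard


namespace RandomBilliard

/-- Auxiliary: positivity of `u a (-θ)`. -/
lemma u_neg_pos {a θ : ℝ} (ha : 0 < a) (ha2 : a < π / 2) (h1 : a < θ) (h2 : θ < π) :
    0 < u a (-θ) := by
  have hta : 0 < Real.tan a := Real.tan_pos_of_pos_of_lt_pi_div_two ha ha2
  have key : Real.tan a / Real.tan θ < 1 := by
    rcases lt_trichotomy θ (π / 2) with h | h | h
    · have ht : Real.tan a < Real.tan θ :=
        Real.tan_lt_tan_of_nonneg_of_lt_pi_div_two ha.le h h1
      exact (div_lt_one (hta.trans ht)).2 ht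
    · rw [h, Real.tan_pi_div_two, div_zero]; norm_num
    · have hs : 0 < Real.sin θ := Real.sin_pos_of_pos_of_lt_pi (ha.trans h1) h2
      have hc : Real.cos θ < 0 :=
        Real.cos_neg_of_pi_div_two_lt_of_lt h (by linarith [Real.pi_pos])
      have htθ : Real.tan θ < 0 := by
        rw [Real.tan_eq_sin_div_cos]; exact div_neg_of_pos_of_neg hs hc
      have : Real.tan a / Real.tan θ < 0 := div_neg_of_pos_of_neg hta htθ
      linarith
  unfold u
  rw [Real.tan_neg, div_neg]
  linarith

lemma p0_eq (α θ : ℝ) (h : θ < α) : p α 0 θ = 1 := if_pos h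

lemma p2_pos {α : ℝ} (hα : α ∈ Set.Ioo 0 (π / 6)) {θ : ℝ} (h1 : 2 * α < θ) (h2 : θ < π) :
    0 < p α 2 θ := by
  obtain ⟨hα0, hα6⟩ := hα
  have hπ := Real.pi_pos
  show 0 < if θ < 2 * α then (0:ℝ) else if θ < 3 * α then 2 * Real.cos (2 * α) * u (2 * α) (-θ)
      else if θ < π - α then u α (-θ) else 1
  rw [if_neg (not_lt.2 h1.le)]
  by_cases h3 : θ < 3 * α
  · rw [if_pos h3]
    have hc : 0 < Real.cos (2 * α) :=
      Real.cos_pos_of_mem_Ioo ⟨by linarith, by linarith⟩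
    have hu : 0 < u (2 * α) (-θ) := u_neg_pos (by linarith) (by linarith) h1 h2
    positivity
  · rw [if_neg h3]
    by_cases h4 : θ < π - α
    · rw [if_pos h4]
      exact u_neg_pos hα0 (by linarith) (by linarith) h2
    · rw [if_neg h4]; norm_num

lemma p3_pos {α : ℝ} (hα : α ∈ Set.Ioo 0 (π / 6)) {θ : ℝ} (h1 : α < θ) (h2 : θ < 2 * α) :
    0 < p α 3 θ := by
  obtain ⟨hα0, hα6⟩ := hα
  have hπ := Real.pi_pos
  show 0 < if θ < α then (0:ℝ) else if θ < 2 * α then u α (-θ)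
      else if θ < 3 * α then u α (-θ) - 2 * Real.cos (2 * α) * u (2 * α) (-θ) else 0
  rw [if_neg (not_lt.2 h1.le), if_pos h2]
  exact u_neg_pos hα0 (by linarith) h1 (by linarith)

/-- A sequence is "good" for `θ` if every single transition has positive probability. -/
def Good (α θ : ℝ) (x : ℕ → Fin 4) : Prop :=
  ∀ j : ℕ, 0 < p α (x j) (iterT α x j θ)

lemma good_mem {α θ : ℝ} {x : ℕ → Fin 4} (h : Good α θ x) : x ∈ SigmaTheta α θ :=
  fun _ => Finset.prod_pos fun j _ => h j

/-- Prepend a symbol to a sequence. -/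
def cons (i : Fin 4) (y : ℕ → Fin 4) : ℕ → Fin 4 := fun j => Nat.casesOn j i y

lemma iterT_cons (α : ℝ) (i : Fin 4) (y : ℕ → Fin 4) (k : ℕ) (θ : ℝ) :
    iterT α (cons i y) (k + 1) θ = iterT α y k (T α i θ) := by
  induction k with
  | zero => rfl
  | succ k ih =>
      show T α (cons i y (k + 1)) (iterT α (cons i y) (k + 1) θ)
        = T α (y k) (iterT α y k (T α i θ))
      rw [ih]; rfl

lemma good_cons {α θ : ℝ} {i : Fin 4} {y : ℕ → Fin 4}
    (h1 : 0 < p α i θ) (h2 : Good α (T α i θ) y) : Good α θ (cons i y) := by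
  intro j
  cases j with
  | zero => exact h1
  | succ j => rw [iterT_cons]; exact h2 j

/-- The alternating tail sequence `T₁, T₃, T₁, T₃, …`. -/
def alt : ℕ → Fin 4 := fun j => if j % 2 = 0 then 0 else 2

lemma iterT_alt (α θ : ℝ) (j : ℕ) :
    iterT α alt j θ = if j % 2 = 0 then θ else θ + 2 * α := by
  induction j with
  | zero => rfl
  | succ j ih =>
      show T α (alt j) (iterT α alt j θ) = _
      rcases Nat.even_or_odd j with h | h
      · have hj : j % 2 = 0 := Nat.even_iff.1 h
        have hj1 : (j + 1) % 2 ≠ 0 := by omega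
        rw [ih, if_pos hj, if_neg hj1, show alt j = (0 : Fin 4) from if_pos hj]
        show θ + 2 * α = θ + 2 * α
        rfl
      · have hj : j % 2 = 1 := Nat.odd_iff.1 h
        have hj' : ¬ j % 2 = 0 := by omega
        have hj1 : (j + 1) % 2 = 0 := by omega
        rw [ih, if_neg hj', if_pos hj1, show alt j = (2 : Fin 4) from if_neg hj']
        show (θ + 2 * α) - 2 * α = θ
        ring

lemma good_alt {α : ℝ} (hα : α ∈ Set.Ioo 0 (π / 6)) {θ : ℝ} (h0 : 0 < θ) (h1 : θ < α) :
    Good α θ alt := by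
  have hπ := Real.pi_pos
  intro j
  rcases Nat.even_or_odd j with h | h
  · have hj : j % 2 = 0 := Nat.even_iff.1 h
    rw [iterT_alt, if_pos hj]
    show 0 < p α (if j % 2 = 0 then 0 else 2) θ
    rw [if_pos hj, p0_eq α θ h1]
    norm_num
  · have hj : j % 2 = 1 := Nat.odd_iff.1 h
    have hj' : ¬ j % 2 = 0 := by omega
    rw [iterT_alt, if_neg hj']
    show 0 < p α (if j % 2 = 0 then 0 else 2) (θ + 2 * α)
    rw [if_neg hj']
    exact p2_pos hα (by linarith) (by linarith [hα.1, hα.2])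

lemma main_claim {α : ℝ} (hα : α ∈ Set.Ioo 0 (π / 6)) :
    ∀ n : ℕ, ∀ θ : ℝ, 0 < θ → θ < π → (∀ k : ℕ, θ ≠ (k : ℝ) * α) → θ < 2 * α * (n + 1) →
      ∃ x : ℕ → Fin 4, Good α θ x ∧ ∃ m : ℕ, iterT α x m θ ∈ Set.Ioo 0 α := by
  have hα0 := hα.1
  have hα6 := hα.2
  have hπ := Real.pi_pos
  intro n
  induction n with
  | zero =>
    intro θ h0 hπ' hk hb
    have h2 : θ < 2 * α := by push_cast at hb; linarith
    rcases lt_trichotomy θ α with h | h | h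
    · exact ⟨alt, good_alt hα h0 h, 0, h0, h⟩
    · exact absurd h (by simpa using hk 1)
    · -- α < θ < 2α : apply T₄ then T₃
      refine ⟨cons 3 (cons 2 alt), ?_, 2, ?_⟩
      · apply good_cons (p3_pos hα h h2)
        apply good_cons (p2_pos hα (show 2 * α < T α 3 θ by show 2*α < -θ + 4*α; linarith)
          (show T α 3 θ < π by show -θ + 4*α < π; linarith))
        exact good_alt hα (show (0:ℝ) < (-θ + 4*α) - 2*α by linarith)
          (show (-θ + 4*α) - 2*α < α by linarith)
      · rw [show (2 : ℕ) = 1 + 1 from rfl, iterT_cons, iterT_cons]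
        exact ⟨show (0:ℝ) < (-θ + 4*α) - 2*α by linarith,
          show ((-θ + 4*α) - 2*α : ℝ) < α by linarith⟩
  | succ n ih =>
    intro θ h0 hπ' hk hb
    by_cases hsmall : θ < 2 * α * (n + 1)
    · exact ih θ h0 hπ' hk hsmall
    · have hge : 2 * α * (n + 1) ≤ θ := le_of_not_gt hsmall
      have h2α : 2 * α < θ := by
        have hne : θ ≠ 2 * α := by
          have := hk 2; push_cast at this
          intro hc; exact this (by linarith)
        have hle : 2 * α ≤ θ := by
          have h1 : (1 : ℝ) ≤ (n : ℝ) + 1 := by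
            have : (0:ℝ) ≤ (n:ℝ) := Nat.cast_nonneg n
            linarith
          nlinarith
        exact lt_of_le_of_ne hle (Ne.symm hne)
      obtain ⟨y, hy, m, hm⟩ := ih (θ - 2 * α) (by linarith) (by linarith)
        (fun k => by
          have := hk (k + 2); push_cast at this
          intro hc; exact this (by linarith))
        (by push_cast at hb ⊢; linarith)
      refine ⟨cons 2 y, good_cons (p2_pos hα h2α hπ') hy, m + 1, ?_⟩
      rw [iterT_cons]
      exact hm

end RandomBilliard

open RandomBilliard

/-- for `θ ∈ (0, π)` with `θ ≠ kα` for all `k ∈ ℕ`, there are an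
admissible sequence `x ∈ Σ_θ` and `m ∈ ℕ` with `T_x^{(m)}(θ) ∈ (0, α)`. -/
theorem exists_iterate_in_Ioo_zero_alpha (α : ℝ) (hα : α ∈ Set.Ioo 0 (π / 6))
    (θ : ℝ) (hθ : θ ∈ Set.Ioo 0 π) (hk : ∀ k : ℕ, θ ≠ (k : ℝ) * α) :
    ∃ x ∈ SigmaTheta α θ, ∃ m : ℕ, iterT α x m θ ∈ Set.Ioo 0 α := by
  obtain ⟨n, hn⟩ := exists_nat_gt (θ / (2 * α))
  have hα0 := hα.1
  have hb : θ < 2 * α * (n + 1) := by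
    have h2 : (0:ℝ) < 2 * α := by linarith
    have := (div_lt_iff₀ h2).1 hn
    nlinarith
  obtain ⟨x, hx, m, hm⟩ := main_claim hα n θ hθ.1 hθ.2 hk hb
  exact ⟨x, good_mem hx, m, hm⟩
end
end

section
/- For all θ, θ' ∈ (0,π), either C(θ) ∩ C(θ') = ∅ or C(θ) = C(θ'); in particular, if θ' ∈ C(θ) then C(θ') = C(θ). -/
open Real MeasureTheory Set Filter Topology
open scoped ENNReal NNReal

noncomputable section

namespace RandomBilliard

/-! The random map is reversible: each `p_i` is positive exactly on an interval of `(0, π)`,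
and `T_i` maps that interval onto the support of the probability of its inverse map (`T_1` and
`T_3` undo each other, `T_2` and `T_4` are involutions). Hence reachability inside `(0, π)` is
an equivalence relation. Since at every point some step has positive probability, every finite
admissible path extends to an admissible sequence, so `C(θ)` is exactly the equivalence class
of `θ`. -/

open Relation

lemma u_neg (a t : ℝ) : u a (-t) = u a (π - t) := by
  rw [u, u, tan_neg, tan_pi_sub]

lemma u_pos_iff {a s : ℝ} (ha : a ∈ Ioo 0 (π / 2)) (hs : s ∈ Ioo 0 π) :
    0 < u a s ↔ s < π - a := by
  obtain ⟨ha0, ha1⟩ := ha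
  obtain ⟨hs0, hs1⟩ := hs
  have hta : 0 < tan a := tan_pos_of_pos_of_lt_pi_div_two ha0 ha1
  rcases lt_trichotomy s (π / 2) with h | rfl | h
  · have hts : 0 < tan s := tan_pos_of_pos_of_lt_pi_div_two hs0 h
    refine iff_of_true ?_ (by linarith)
    rw [u]
    positivity
  · refine iff_of_true ?_ (by linarith)
    norm_num [u, tan_pi_div_two]
  · have htr : 0 < tan (π - s) := tan_pos_of_pos_of_lt_pi_div_two (by linarith) (by linarith)
    have hmono : tan a < tan (π - s) ↔ a < π - s :=
      strictMonoOn_tan.lt_iff_lt ⟨by linarith, ha1⟩ ⟨by linarith, by linarith⟩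
    rw [u, ← neg_neg (tan s), ← tan_pi_sub, div_neg, ← sub_eq_add_neg]
    rw [← div_lt_one htr] at hmono
    rw [show s < π - a ↔ a < π - s by constructor <;> intro <;> linarith, ← hmono]
    constructor <;> intro <;> linarith

lemma two_cos_two_mul_sub_one_mul_tan_three_mul {α : ℝ} (h1 : cos α ≠ 0)
    (h3 : cos (3 * α) ≠ 0) : (2 * cos (2 * α) - 1) * tan (3 * α) = 2 * sin (2 * α) - tan α := by
  have c3 : cos (3 * α) = cos α * (4 * cos α ^ 2 - 3) := by
    rw [cos_three_mul]; ring
  have h4 : 4 * cos α ^ 2 - 3 ≠ 0 := by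
    rw [c3] at h3; exact right_ne_zero_of_mul h3
  rw [tan_eq_sin_div_cos, tan_eq_sin_div_cos, c3, sin_three_mul, sin_two_mul, cos_two_mul]
  field_simp
  rw [div_eq_iff (by intro h; apply h4; linarith)]
  linear_combination (-4 * sin α * (4 * cos α ^ 2 - 3)) * sin_sq_add_cos_sq α

lemma u_sub_two_cos_mul_u_eq {α s : ℝ} (h1 : cos α ≠ 0) (h2 : cos (2 * α) ≠ 0)
    (h3 : cos (3 * α) ≠ 0) (hs : tan s ≠ 0) :
    u α s - 2 * cos (2 * α) * u (2 * α) s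
      = (2 * cos (2 * α) - 1) * (tan s + tan (3 * α)) / (-2 * tan s) := by
  have key := two_cos_two_mul_sub_one_mul_tan_three_mul h1 h3
  rw [u, u, tan_eq_sin_div_cos (2 * α)]
  field_simp
  rw [mul_comm α 3]
  linear_combination key

lemma u_sub_two_cos_mul_u_pos_iff {α s : ℝ} (hα : α ∈ Ioo 0 (π / 6)) (hs : s ∈ Ioo (π / 2) π) :
    0 < u α s - 2 * cos (2 * α) * u (2 * α) s ↔ π - 3 * α < s := by
  obtain ⟨h0, h1⟩ := hα
  obtain ⟨hs0, hs1⟩ := hs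
  have hA : 0 < 2 * cos (2 * α) - 1 := by
    have h : cos (π / 3) < cos (2 * α) :=
      cos_lt_cos_of_nonneg_of_le_pi (by linarith) (by linarith) (by linarith)
    rw [cos_pi_div_three] at h
    linarith
  have htr : 0 < tan (π - s) := tan_pos_of_pos_of_lt_pi_div_two (by linarith) (by linarith)
  have hmono : tan (π - s) < tan (3 * α) ↔ π - s < 3 * α :=
    strictMonoOn_tan.lt_iff_lt ⟨by linarith, by linarith⟩ ⟨by linarith, by linarith⟩
  have hts : tan s = -tan (π - s) := by rw [tan_pi_sub, neg_neg]
  have hcos {x : ℝ} (hx : x ∈ Ioo 0 (π / 2)) : cos x ≠ 0 :=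
    (cos_pos_of_mem_Ioo ⟨by linarith [hx.1], hx.2⟩).ne'
  rw [u_sub_two_cos_mul_u_eq (hcos ⟨h0, by linarith⟩) (hcos ⟨by linarith, by linarith⟩)
    (hcos ⟨by linarith, by linarith⟩) (by rw [hts]; exact neg_ne_zero.2 htr.ne'), hts,
    show π - 3 * α < s ↔ π - s < 3 * α by constructor <;> intro <;> linarith, ← hmono]
  rw [show -2 * -tan (π - s) = 2 * tan (π - s) by ring, div_pos_iff_of_pos_right (by positivity),
    mul_pos_iff_of_pos_left hA]
  constructor <;> intro <;> linarith

section Support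

variable {α t : ℝ} (hα : α ∈ Ioo 0 (π / 6)) (ht : t ∈ Ioo 0 π)
include hα ht

lemma p_zero_pos_iff : 0 < p α 0 t ↔ t < π - 2 * α := by
  obtain ⟨h0, h1⟩ := hα
  have hc : 0 < 2 * cos (2 * α) := by
    have := cos_pos_of_mem_Ioo (x := 2 * α) ⟨by linarith, by linarith⟩; positivity
  dsimp only [p]
  split_ifs with g1 g2 g3
  · exact iff_of_true one_pos (by linarith)
  · exact iff_of_true ((u_pos_iff ⟨h0, by linarith⟩ ht).2 (by linarith)) (by linarith)
  · rw [mul_pos_iff_of_pos_left hc, u_pos_iff ⟨by linarith, by linarith⟩ ht]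
  · exact iff_of_false (lt_irrefl 0) (by linarith)

lemma p_one_pos_iff : 0 < p α 1 t ↔ π - 3 * α < t ∧ t < π - α := by
  obtain ⟨h0, h1⟩ := hα
  dsimp only [p]
  split_ifs with g1 g2 g3
  · exact iff_of_false (lt_irrefl 0) (by intro h; linarith [h.1])
  · rw [u_sub_two_cos_mul_u_pos_iff ⟨h0, h1⟩ ⟨by linarith, ht.2⟩]
    exact ⟨fun h => ⟨h, by linarith⟩, And.left⟩
  · exact iff_of_true ((u_pos_iff ⟨h0, by linarith⟩ ht).2 g3) ⟨by linarith, g3⟩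
  · exact iff_of_false (lt_irrefl 0) (by intro h; linarith [h.2])

lemma p_two_pos_iff : 0 < p α 2 t ↔ 2 * α < t := by
  obtain ⟨h0, h1⟩ := hα
  have hc : 0 < 2 * cos (2 * α) := by
    have := cos_pos_of_mem_Ioo (x := 2 * α) ⟨by linarith, by linarith⟩; positivity
  have hs : π - t ∈ Ioo 0 π := ⟨by linarith [ht.2], by linarith [ht.1]⟩
  dsimp only [p]
  simp only [u_neg]
  split_ifs with g1 g2 g3
  · exact iff_of_false (lt_irrefl 0) (by linarith)
  · rw [mul_pos_iff_of_pos_left hc, u_pos_iff ⟨by linarith, by linarith⟩ hs]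
    constructor <;> intro <;> linarith
  · exact iff_of_true ((u_pos_iff ⟨h0, by linarith⟩ hs).2 (by linarith)) (by linarith)
  · exact iff_of_true one_pos (by linarith)

lemma p_three_pos_iff : 0 < p α 3 t ↔ α < t ∧ t < 3 * α := by
  obtain ⟨h0, h1⟩ := hα
  have hs : π - t ∈ Ioo 0 π := ⟨by linarith [ht.2], by linarith [ht.1]⟩
  dsimp only [p]
  simp only [u_neg]
  split_ifs with g1 g2 g3
  · exact iff_of_false (lt_irrefl 0) (by intro h; linarith [h.1])
  · rw [u_pos_iff ⟨h0, by linarith⟩ hs]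
    exact ⟨fun h => ⟨by linarith, by linarith⟩, fun h => by linarith [h.1]⟩
  · refine iff_of_true ((u_sub_two_cos_mul_u_pos_iff ⟨h0, h1⟩ ⟨?_, hs.2⟩).2 ?_) ⟨?_, g3⟩ <;>
      linarith
  · exact iff_of_false (lt_irrefl 0) (by intro h; linarith [h.2])

end Support

def Step (α t t' : ℝ) : Prop :=
  t ∈ Ioo 0 π ∧ ∃ i, 0 < p α i t ∧ T α i t = t'

lemma Step.symm {α t t' : ℝ} (hα : α ∈ Ioo 0 (π / 6)) (h : Step α t t') : Step α t' t := by
  obtain ⟨ht, i, hp, rfl⟩ := h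
  have h0 := hα.1
  have h1 := hα.2
  match i with
  | 0 =>
    rw [p_zero_pos_iff hα ht] at hp
    have hT : t + 2 * α ∈ Ioo 0 π := ⟨by linarith [ht.1], by linarith⟩
    exact ⟨hT, 2, (p_two_pos_iff hα hT).2 (by linarith [ht.1]),
      by simp only [T]; ring⟩
  | 1 =>
    rw [p_one_pos_iff hα ht] at hp
    have hT : -t + 2 * π - 4 * α ∈ Ioo 0 π := ⟨by linarith [hp.2], by linarith [hp.1]⟩
    exact ⟨hT, 1, (p_one_pos_iff hα hT).2 ⟨by linarith [hp.2], by linarith [hp.1]⟩,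
      by simp only [T]; ring⟩
  | 2 =>
    rw [p_two_pos_iff hα ht] at hp
    have hT : t - 2 * α ∈ Ioo 0 π := ⟨by linarith, by linarith [ht.2]⟩
    exact ⟨hT, 0, (p_zero_pos_iff hα hT).2 (by linarith [ht.2]),
      by simp only [T]; ring⟩
  | 3 =>
    rw [p_three_pos_iff hα ht] at hp
    have hT : -t + 4 * α ∈ Ioo 0 π := ⟨by linarith [hp.2], by linarith [hp.1]⟩
    exact ⟨hT, 3, (p_three_pos_iff hα hT).2 ⟨by linarith [hp.2], by linarith [hp.1]⟩,
      by simp only [T]; ring⟩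

lemma exists_p_pos {α t : ℝ} (hα : α ∈ Ioo 0 (π / 6)) (ht : t ∈ Ioo 0 π) :
    ∃ i, 0 < p α i t := by
  by_cases h : t < π - 2 * α
  · exact ⟨0, (p_zero_pos_iff hα ht).2 h⟩
  · exact ⟨2, (p_two_pos_iff hα ht).2 (by linarith [not_lt.1 h, hα.2, pi_pos])⟩

lemma iterT_succ' (α : ℝ) (x : ℕ → Fin 4) (k : ℕ) (θ : ℝ) :
    iterT α x (k + 1) θ = iterT α (fun j => x (j + 1)) k (T α (x 0) θ) := by
  induction k with
  | zero => rfl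
  | succ k ih => exact congrArg (T α (x (k + 1))) ih

lemma mem_SigmaTheta_iff {α θ : ℝ} {x : ℕ → Fin 4} :
    x ∈ SigmaTheta α θ ↔ ∀ j, 0 < p α (x j) (iterT α x j θ) := by
  refine ⟨fun hx j => ?_, fun hx k => Finset.prod_pos fun j _ => hx j⟩
  have hsucc := hx (j + 1)
  rw [Finset.prod_range_succ] at hsucc
  exact pos_of_mul_pos_right hsucc (hx j).le

lemma mem_SigmaTheta_iff_succ {α θ : ℝ} {x : ℕ → Fin 4} :
    x ∈ SigmaTheta α θ ↔
      0 < p α (x 0) θ ∧ (fun j => x (j + 1)) ∈ SigmaTheta α (T α (x 0) θ) := by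
  simp only [mem_SigmaTheta_iff, ← iterT_succ']
  exact ⟨fun h => ⟨h 0, fun j => h (j + 1)⟩, fun h j => j.casesOn h.1 h.2⟩

lemma SigmaTheta_nonempty {α θ : ℝ} (hα : α ∈ Ioo 0 (π / 6)) (hθ : θ ∈ Ioo 0 π) :
    (SigmaTheta α θ).Nonempty := by
  choose! f hf using fun t (ht : t ∈ Ioo 0 π) => exists_p_pos hα ht
  set g : ℝ → ℝ := fun t => T α (f t) t
  have hg : MapsTo g (Ioo 0 π) (Ioo 0 π) := fun t ht => (Step.symm hα ⟨ht, _, hf t ht, rfl⟩).1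
  have horbit (j : ℕ) : iterT α (fun j => f (g^[j] θ)) j θ = g^[j] θ := by
    induction j with
    | zero => rfl
    | succ j ih => exact (congrArg (T α _) ih).trans (Function.iterate_succ_apply' g j θ).symm
  exact ⟨_, mem_SigmaTheta_iff.2 fun j => by rw [horbit]; exact hf _ (hg.iterate j hθ)⟩

lemma reflTransGen_step_iterT {α θ : ℝ} (hα : α ∈ Ioo 0 (π / 6)) (hθ : θ ∈ Ioo 0 π)
    {x : ℕ → Fin 4} (hx : x ∈ SigmaTheta α θ) (k : ℕ) :
    ReflTransGen (Step α) θ (iterT α x k θ) := by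
  induction k generalizing θ x with
  | zero => exact .refl
  | succ k ih =>
    obtain ⟨hp, hx'⟩ := mem_SigmaTheta_iff_succ.1 hx
    have hstep : Step α θ (T α (x 0) θ) := ⟨hθ, _, hp, rfl⟩
    rw [iterT_succ']
    exact .head hstep (ih (hstep.symm hα).1 hx')

lemma exists_iterT_eq_of_reflTransGen {α θ θ' : ℝ} (hα : α ∈ Ioo 0 (π / 6))
    (hθ' : θ' ∈ Ioo 0 π) (h : ReflTransGen (Step α) θ θ') :
    ∃ x ∈ SigmaTheta α θ, ∃ k, iterT α x k θ = θ' := by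
  induction h using ReflTransGen.head_induction_on with
  | refl =>
    obtain ⟨x, hx⟩ := SigmaTheta_nonempty hα hθ'
    exact ⟨x, hx, 0, rfl⟩
  | head hstep _ ih =>
    obtain ⟨-, i, hp, rfl⟩ := hstep
    obtain ⟨x, hx, k, hk⟩ := ih
    exact ⟨Stream'.cons i x, mem_SigmaTheta_iff_succ.2 ⟨hp, hx⟩, k + 1,
      (iterT_succ' α _ k _).trans hk⟩

lemma mem_Cset_iff {α θ θ' : ℝ} (hα : α ∈ Ioo 0 (π / 6)) (hθ : θ ∈ Ioo 0 π) :
    θ' ∈ Cset α θ ↔ θ' ∈ Ioo 0 π ∧ ReflTransGen (Step α) θ θ' := by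
  refine ⟨fun ⟨hθ', x, k, hx, hk⟩ => ⟨hθ', hk ▸ reflTransGen_step_iterT hα hθ hx k⟩,
    fun ⟨hθ', h⟩ => ⟨hθ', ?_⟩⟩
  obtain ⟨x, hx, k, hk⟩ := exists_iterT_eq_of_reflTransGen hα hθ' h
  exact ⟨x, k, hx, hk⟩

lemma Cset_eq_of_mem {α θ θ' : ℝ} (hα : α ∈ Ioo 0 (π / 6)) (hθ : θ ∈ Ioo 0 π)
    (h : θ' ∈ Cset α θ) : Cset α θ' = Cset α θ := by
  have : Std.Symm (Step α) := ⟨fun _ _ => Step.symm hα⟩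
  obtain ⟨hθ', hreach⟩ := (mem_Cset_iff hα hθ).1 h
  ext η
  rw [mem_Cset_iff hα hθ', mem_Cset_iff hα hθ]
  exact and_congr_right fun _ => ⟨hreach.trans, (Std.Symm.symm _ _ hreach).trans⟩

end RandomBilliard

open RandomBilliard

/-- for all `θ, θ' ∈ (0, π)`, either `C(θ) ∩ C(θ') = ∅` or
`C(θ) = C(θ')`; in particular, if `θ' ∈ C(θ)` then `C(θ') = C(θ)`. -/
theorem Cset_disjoint_or_eq (α : ℝ) (hα : α ∈ Set.Ioo 0 (π / 6)) :
    ∀ θ ∈ Set.Ioo 0 π, ∀ θ' ∈ Set.Ioo 0 π,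
      (Cset α θ ∩ Cset α θ' = ∅ ∨ Cset α θ = Cset α θ') ∧
      (θ' ∈ Cset α θ → Cset α θ' = Cset α θ) := by
  intro θ hθ θ' hθ'
  refine ⟨?_, Cset_eq_of_mem hα hθ⟩
  rcases (Cset α θ ∩ Cset α θ').eq_empty_or_nonempty with h | ⟨η, hηθ, hηθ'⟩
  · exact .inl h
  · exact .inr ((Cset_eq_of_mem hα hθ hηθ).symm.trans (Cset_eq_of_mem hα hθ' hηθ'))
end
end

section
/- If α/π is rational, then the Strong Knudsen's Law fails: there exist a probability measure ν on [0,π] absolutely continuous with respect to μ and a Borel set A ⊆ [0,π] such that ν^(n)(A) does not converge to μ(A) as n → ∞. -/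
open Real MeasureTheory Set Filter Topology
open scoped ENNReal NNReal

noncomputable section

open RandomBilliard

/- When `α/π` is rational, `2α` and `2π` are integer multiples of a common `c > 0`. Every `T_i`
has the form `θ ↦ ±θ + t` with `t ∈ cℤ`, and `-α ≡ α` modulo `cℤ`, so the chain started in a
thin closed neighbourhood `A` of `α + cℤ` never leaves it. Starting from `μ` conditioned on `A`,
every iterate gives `A` mass `1`, whereas `μ(A) < 1` because `A` misses a whole interval of
`[0, π]`. -/

namespace ENNReal

lemma ofReal_sum_le {ι : Type*} (s : Finset ι) (f : ι → ℝ) :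
    ENNReal.ofReal (∑ i ∈ s, f i) ≤ ∑ i ∈ s, ENNReal.ofReal (f i) := by
  classical
  induction s using Finset.induction_on with
  | empty => simp
  | insert i s hi ih =>
    rw [Finset.sum_insert hi, Finset.sum_insert hi]
    exact ofReal_add_le.trans (by gcongr)

end ENNReal

namespace Real

lemma measurable_tan : Measurable tan := by
  rw [show tan = fun x => sin x / cos x from funext tan_eq_sin_div_cos]
  fun_prop

end Real

namespace MeasureTheory

lemma measure_lt_one_of_disjoint {Ω : Type*} [MeasurableSpace Ω]
    {μ : Measure Ω} [IsProbabilityMeasure μ] {s t : Set Ω} (ht : MeasurableSet t)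
    (hst : Disjoint s t) (hμt : 0 < μ t) : μ s < 1 :=
  calc μ s ≤ μ tᶜ := measure_mono hst.subset_compl_right
    _ = 1 - μ t := prob_compl_eq_one_sub ht
    _ < 1 := ENNReal.sub_lt_self ENNReal.one_ne_top one_ne_zero hμt.ne'

end MeasureTheory

namespace RandomBilliard

lemma u_add_u_neg (a θ : ℝ) : u a θ + u a (-θ) = 1 := by
  simp only [u, Real.tan_neg, div_neg]
  ring

lemma measurable_u (a : ℝ) : Measurable (u a) := by
  have := Real.measurable_tan
  unfold u
  fun_prop

lemma measurable_T (α : ℝ) (i : Fin 4) : Measurable (T α i) := by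
  fin_cases i <;> simp only [T] <;> fun_prop

lemma measurable_p (α : ℝ) (i : Fin 4) : Measurable (p α i) := by
  have := measurable_u
  fin_cases i <;> simp only [p] <;>
    refine Measurable.ite measurableSet_Iio (by fun_prop) <|
      Measurable.ite measurableSet_Iio (by fun_prop) <|
      Measurable.ite measurableSet_Iio (by fun_prop) (by fun_prop)

variable {α : ℝ}

lemma sum_p_eq_one (hα : α ∈ Ioo 0 (π / 6)) (θ : ℝ) : ∑ i, p α i θ = 1 := by
  obtain ⟨h0, h6⟩ := hα
  have := u_add_u_neg α θ
  simp only [Fin.sum_univ_four, p]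
  split_ifs <;> linarith

lemma T_mem_Icc (hα : α ∈ Ioo 0 (π / 6)) {i : Fin 4} {θ : ℝ} (hθ : θ ∈ Icc 0 π)
    (hp : 0 < p α i θ) : T α i θ ∈ Icc 0 π := by
  obtain ⟨h0, h6⟩ := hα
  obtain ⟨hθ0, hθπ⟩ := hθ
  fin_cases i <;>
    · simp only [p, T] at hp ⊢
      split_ifs at hp <;> constructor <;> linarith

def IsAbsorbing (α : ℝ) (A : Set ℝ) : Prop :=
  ∀ i, ∀ θ ∈ A, 0 < p α i θ → T α i θ ∈ A

lemma le_stepMeasure_apply (hα : α ∈ Ioo 0 (π / 6)) {A : Set ℝ} (hA : MeasurableSet A)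
    (hAbs : IsAbsorbing α A) (m : Measure ℝ) : m A ≤ stepMeasure α m A := by
  have hpre : ∀ i, MeasurableSet (T α i ⁻¹' A) := fun i => hA.preimage (measurable_T α i)
  have hp : ∀ i, Measurable fun θ => ENNReal.ofReal (p α i θ) :=
    fun i => (measurable_p α i).ennreal_ofReal
  -- the weight `p_i` vanishes wherever `T_i` would leave `A`
  have hleave : ∀ i, ∫⁻ θ in A, ENNReal.ofReal (p α i θ) ∂m
      ≤ ∫⁻ θ in T α i ⁻¹' A, ENNReal.ofReal (p α i θ) ∂m := by
    intro i
    rw [← lintegral_indicator hA, ← lintegral_indicator (hpre i)]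
    refine lintegral_mono fun θ => ?_
    by_cases hθ : θ ∈ A
    · rcases le_or_gt (p α i θ) 0 with h | h
      · simp [indicator_of_mem hθ, ENNReal.ofReal_eq_zero.2 h]
      · rw [indicator_of_mem hθ, indicator_of_mem (show θ ∈ T α i ⁻¹' A from hAbs i θ hθ h)]
    · simp [indicator_of_notMem hθ]
  calc m A = ∫⁻ _ in A, 1 ∂m := (setLIntegral_one A).symm
    _ ≤ ∫⁻ θ in A, ∑ i, ENNReal.ofReal (p α i θ) ∂m := by
        refine setLIntegral_mono (Finset.measurable_sum _ fun i _ => hp i) fun θ _ => ?_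
        simpa [sum_p_eq_one hα θ] using ENNReal.ofReal_sum_le Finset.univ fun i => p α i θ
    _ = ∑ i, ∫⁻ θ in A, ENNReal.ofReal (p α i θ) ∂m := lintegral_finsetSum _ fun i _ => hp i
    _ ≤ ∑ i, ∫⁻ θ in T α i ⁻¹' A, ENNReal.ofReal (p α i θ) ∂m :=
        Finset.sum_le_sum fun i _ => hleave i
    _ = stepMeasure α m A := by
        simp only [stepMeasure, Measure.finsetSum_apply, Measure.map_apply (measurable_T α _) hA,
          withDensity_apply _ (hpre _)]

lemma le_stepMeasure_iterate_apply (hα : α ∈ Ioo 0 (π / 6)) {A : Set ℝ} (hA : MeasurableSet A)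
    (hAbs : IsAbsorbing α A) (m : Measure ℝ) (n : ℕ) : m A ≤ (stepMeasure α)^[n] m A := by
  induction n with
  | zero => rfl
  | succ n ih =>
    rw [Function.iterate_succ_apply']
    exact ih.trans (le_stepMeasure_apply hα hA hAbs _)

lemma mu0_Icc {a b : ℝ} (ha : 0 ≤ a) (hab : a ≤ b) (hb : b ≤ π) :
    mu0 (Icc a b) = ENNReal.ofReal ((cos a - cos b) / 2) := by
  have hsub : Icc a b ⊆ Icc 0 π := Icc_subset_Icc ha hb
  have hint : IntegrableOn (fun θ => 1 / 2 * sin θ) (Icc a b) :=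
    (continuous_const.mul continuous_sin).integrableOn_Icc
  rw [mu0, withDensity_apply _ measurableSet_Icc, Measure.restrict_restrict measurableSet_Icc,
    inter_eq_left.2 hsub, ← ofReal_integral_eq_lintegral_ofReal hint, integral_Icc_eq_integral_Ioc,
    ← intervalIntegral.integral_of_le hab, intervalIntegral.integral_const_mul, integral_sin]
  · ring_nf
  · refine ae_restrict_of_forall_mem measurableSet_Icc fun θ hθ => ?_
    have := sin_nonneg_of_nonneg_of_le_pi (hsub hθ).1 (hsub hθ).2
    positivity

instance : IsProbabilityMeasure mu0 := by
  constructor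
  have huniv : mu0 univ = mu0 (Icc 0 π) := by
    simp only [mu0, withDensity_apply _ MeasurableSet.univ, withDensity_apply _ measurableSet_Icc,
      Measure.restrict_univ, Measure.restrict_restrict measurableSet_Icc, inter_self]
  rw [huniv, mu0_Icc le_rfl pi_pos.le le_rfl, cos_zero, cos_pi]
  norm_num

lemma mu0_Icc_pos {a b : ℝ} (ha : 0 ≤ a) (hab : a < b) (hb : b ≤ π) : 0 < mu0 (Icc a b) := by
  rw [mu0_Icc ha hab.le hb, ENNReal.ofReal_pos]
  linarith [cos_lt_cos_of_nonneg_of_le_pi ha hb hab]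

def latticeNbhd (x c δ : ℝ) : Set ℝ := ⋃ k : ℤ, Icc (x + k * c - δ) (x + k * c + δ)

section latticeNbhd

variable {x c δ θ : ℝ}

lemma measurableSet_latticeNbhd : MeasurableSet (latticeNbhd x c δ) :=
  MeasurableSet.iUnion fun _ => measurableSet_Icc

lemma Icc_subset_latticeNbhd : Icc (x - δ) (x + δ) ⊆ latticeNbhd x c δ :=
  fun θ hθ => mem_iUnion.2 ⟨0, by simpa using hθ⟩

lemma add_mem_latticeNbhd (hθ : θ ∈ latticeNbhd x c δ) (m : ℤ) :
    θ + m * c ∈ latticeNbhd x c δ := by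
  obtain ⟨k, hk⟩ := mem_iUnion.1 hθ
  refine mem_iUnion.2 ⟨k + m, ?_⟩
  push_cast
  constructor <;> linarith [hk.1, hk.2]

lemma neg_add_mem_latticeNbhd {e : ℤ} (he : 2 * x = e * c) (hθ : θ ∈ latticeNbhd x c δ)
    (m : ℤ) : -θ + m * c ∈ latticeNbhd x c δ := by
  obtain ⟨k, hk⟩ := mem_iUnion.1 hθ
  refine mem_iUnion.2 ⟨m - e - k, ?_⟩
  push_cast
  constructor <;> linarith [hk.1, hk.2]

lemma disjoint_latticeNbhd_Icc (hc : 0 < c) {a b : ℝ} (ha : x + δ < a) (hb : b < x + c - δ) :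
    Disjoint (latticeNbhd x c δ) (Icc a b) := by
  refine Set.disjoint_left.2 fun θ hθ hab => ?_
  obtain ⟨k, hk⟩ := mem_iUnion.1 hθ
  have hk0 : (0 : ℝ) < k := by nlinarith [hk.1, hk.2, hab.1, hab.2]
  have hk1 : (k : ℝ) < 1 := by nlinarith [hk.1, hk.2, hab.1, hab.2]
  have : (0 : ℤ) < k ∧ k < 1 := ⟨by exact_mod_cast hk0, by exact_mod_cast hk1⟩
  omega

end latticeNbhd

lemma T_mem_latticeNbhd {c δ θ : ℝ} {e f : ℤ} (he : 2 * α = e * c) (hf : 2 * π = f * c)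
    (hθ : θ ∈ latticeNbhd α c δ) (i : Fin 4) : T α i θ ∈ latticeNbhd α c δ := by
  fin_cases i <;> simp only [T]
  · simpa [he] using add_mem_latticeNbhd hθ e
  · convert neg_add_mem_latticeNbhd he hθ (f - 2 * e) using 1
    push_cast; linarith
  · convert add_mem_latticeNbhd hθ (-e) using 1
    push_cast; linarith
  · convert neg_add_mem_latticeNbhd he hθ (2 * e) using 1
    push_cast; linarith

lemma exists_common_period (hrat : ∃ q : ℚ, (q : ℝ) = α / π) :
    ∃ c : ℝ, 0 < c ∧ c ≤ π / 2 ∧ (∃ e : ℤ, 2 * α = e * c) ∧ ∃ f : ℤ, 2 * π = f * c := by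
  obtain ⟨q, hq⟩ := hrat
  have hden : (1 : ℝ) ≤ q.den := by exact_mod_cast q.den_pos
  refine ⟨π / (2 * q.den), by positivity, ?_, ⟨4 * q.num, ?_⟩, ⟨4 * q.den, ?_⟩⟩
  · rw [div_le_div_iff₀ (by positivity) two_pos]
    nlinarith [pi_pos]
  · have hα : α = q.num / q.den * π := by
      rw [Rat.cast_def] at hq
      rw [hq, div_mul_cancel₀ _ pi_ne_zero]
    rw [hα]
    push_cast
    field_simp
    ring
  · push_cast
    field_simp
    ring

lemma exists_absorbing_set (hα : α ∈ Ioo 0 (π / 6)) (hrat : ∃ q : ℚ, (q : ℝ) = α / π) :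
    ∃ A : Set ℝ, MeasurableSet A ∧ A ⊆ Icc 0 π ∧ IsAbsorbing α A ∧ mu0 A ≠ 0 ∧ mu0 A < 1 := by
  obtain ⟨c, hc, hcπ, ⟨e, he⟩, ⟨f, hf⟩⟩ := exists_common_period hrat
  have ⟨hα0, hα6⟩ := hα
  refine ⟨Icc 0 π ∩ latticeNbhd α c (c / 8), measurableSet_Icc.inter measurableSet_latticeNbhd,
    inter_subset_left, fun i θ hθ hp => ⟨T_mem_Icc hα hθ.1 hp, T_mem_latticeNbhd he hf hθ.2 i⟩,
    ?_, ?_⟩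
  · have hcore : Icc α (α + c / 8) ⊆ Icc 0 π ∩ latticeNbhd α c (c / 8) := fun θ hθ =>
      ⟨⟨by linarith [hθ.1], by linarith [hθ.2]⟩,
        Icc_subset_latticeNbhd ⟨by linarith [hθ.1], hθ.2⟩⟩
    exact (mu0_Icc_pos hα0.le (by linarith) (by linarith)).trans_le (measure_mono hcore) |>.ne'
  · exact measure_lt_one_of_disjoint (t := Icc (α + c / 4) (α + c / 2)) measurableSet_Icc
      ((disjoint_latticeNbhd_Icc hc (by linarith) (by linarith)).mono_left inter_subset_right)
      (mu0_Icc_pos (by linarith) (by linarith) (by linarith))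

end RandomBilliard

/-- if `α/π` is rational, the Strong Knudsen's Law fails: there is a
probability measure `ν ≪ μ` and a Borel set `A ⊆ [0, π]` with `ν^(n)(A) ↛ μ(A)`. -/
theorem knudsen_fails_of_rational (α : ℝ) (hα : α ∈ Set.Ioo 0 (π / 6))
    (hrat : ∃ q : ℚ, (q : ℝ) = α / π) :
    ∃ ν : Measure ℝ, IsProbabilityMeasure ν ∧ ν ≪ mu0 ∧
      ∃ A : Set ℝ, MeasurableSet A ∧ A ⊆ Set.Icc 0 π ∧
        ¬ Tendsto (fun n : ℕ => (stepMeasure α)^[n] ν A) atTop (nhds (mu0 A)) := by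
  obtain ⟨A, hA, hAπ, hAbs, hA0, hA1⟩ := exists_absorbing_set hα hrat
  refine ⟨ProbabilityTheory.cond mu0 A, ProbabilityTheory.cond_isProbabilityMeasure hA0,
    ProbabilityTheory.cond_absolutelyContinuous, A, hA, hAπ, fun hlim => ?_⟩
  obtain ⟨n, hn⟩ := (hlim.eventually_lt_const hA1).exists
  have hmass : ProbabilityTheory.cond mu0 A A = 1 :=
    ProbabilityTheory.cond_apply_self hA0 (measure_ne_top _ _)
  exact hn.not_ge (hmass ▸ le_stepMeasure_iterate_apply hα hA hAbs _ n)
end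
end
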